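/- arXiv:2407.07654 — 2 statements merged into one kernel-verified Lean document; each statement's English description precedes it below -/
import Mathlib

section
/- Let n > 3 be an integer and b̃ > 1. Then T̃ₙ(2, b̃) is invertible, all entries of T̃ₙ(2, b̃)⁻¹ are positive, and ‖T̃ₙ(2, b̃)⁻¹‖∞ ≤ (n+1)²/8 − n(b̃−2)/(2(b̃−1)). -/
open Matrix BigOperators Finset

/-- The symmetric tridiagonal near-Toeplitz matrix with corner diagonal entries `bt`,
interior diagonal entries `b`, and off-diagonal entries `-1` (0-based indices). -/
noncomputable def Ttilde (n : ℕ) (b bt : ℝ) : Matrix (Fin n) (Fin n) ℝ :=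
  Matrix.of fun i j =>
    if (i : ℕ) = (j : ℕ) then (if (i : ℕ) = 0 ∨ (i : ℕ) = n - 1 then bt else b)
    else if (i : ℕ) + 1 = (j : ℕ) ∨ (j : ℕ) + 1 = (i : ℕ) then (-1 : ℝ) else 0

/-- The maximum absolute row sum (operator norm induced by the sup norm). -/
noncomputable def normInf {n : ℕ} (A : Matrix (Fin n) (Fin n) ℝ) : ℝ :=
  ⨆ i : Fin n, ∑ j : Fin n, |A i j|

/-! Put `c = b̃ - 1 > 0`. The inverse of `T̃ₙ(2, b̃)` is the discrete Green's function
`G j k = u (min j k) * v (max j k) / (c (c (n - 1) + 2))` with `u j = c j + 1` and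
`v j = c (n - 1 - j) + 1`, which is visibly positive. So the ∞-norm of the inverse is its
largest row sum, and the row sums form the solution of `T̃ x = 1`, namely
`x j = j (n - 1 - j) / 2 + n / (2c)`. Since `j (n - 1 - j) ≤ (n - 1)² / 4`, this is at most
`(n - 1)² / 8 + n / (2c)`, which is the claimed bound. -/

lemma Ttilde_mulVec_apply (n : ℕ) (b bt : ℝ) (x : ℕ → ℝ) (i : Fin n) :
    (Ttilde n b bt *ᵥ fun j => x j) i =
      (if (i : ℕ) = 0 ∨ (i : ℕ) = n - 1 then bt else b) * x i
        - (if (i : ℕ) + 1 < n then x (i + 1) else 0)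
        - (if 0 < (i : ℕ) then x (i - 1) else 0) := by
  set d := if (i : ℕ) = 0 ∨ (i : ℕ) = n - 1 then bt else b
  have hentry : ∀ j : ℕ, (if (i : ℕ) = j then d
      else if (i : ℕ) + 1 = j ∨ j + 1 = (i : ℕ) then (-1 : ℝ) else 0) * x j =
      (if j = i then d * x j else 0) - (if j = i + 1 then x j else 0)
        - (if 0 < (i : ℕ) then (if j = i - 1 then x j else 0) else 0) := by
    intro j
    split_ifs <;> first | omega | ring
  simp only [mulVec, dotProduct, Ttilde, of_apply]
  rw [Fin.sum_univ_eq_sum_range (fun j => (if (i : ℕ) = j then d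
      else if (i : ℕ) + 1 = j ∨ j + 1 = (i : ℕ) then (-1 : ℝ) else 0) * x j) n]
  simp only [hentry, sum_sub_distrib, sum_ite_eq', mem_range, i.isLt, if_true]
  congr 1
  split_ifs with hi
  · rw [sum_ite_eq', if_pos (mem_range.2 (by omega))]
  · exact sum_const_zero

lemma Ttilde_mulVec_eq_of {n : ℕ} (hn : 2 ≤ n) {b bt : ℝ} {x y : ℕ → ℝ}
    (hfirst : bt * x 0 - x 1 = y 0)
    (hinterior : ∀ i, i + 2 < n → b * x (i + 1) - x (i + 2) - x i = y (i + 1))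
    (hlast : bt * x (n - 1) - x (n - 2) = y (n - 1)) :
    (Ttilde n b bt *ᵥ fun j => x j) = fun j : Fin n => y j := by
  funext ⟨i, hi⟩
  rw [Ttilde_mulVec_apply]
  dsimp only
  rcases Nat.eq_zero_or_pos i with rfl | hi0
  · simpa [show 1 < n by omega] using hfirst
  by_cases hlast' : i = n - 1
  · subst hlast'
    simpa [show n - 1 ≠ 0 by omega, show ¬ n - 1 + 1 < n by omega, hi0,
      show n - 1 - 1 = n - 2 by omega] using hlast
  obtain ⟨r, rfl⟩ : ∃ r, i = r + 1 := ⟨i - 1, by omega⟩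
  rw [if_neg (by omega), if_pos (by omega), if_pos hi0, Nat.add_sub_cancel]
  exact hinterior r (by omega)

/-- `u j = c j + 1` solves the interior recurrence with the left boundary condition of
`Ttilde n 2 (c + 1)`, `v j = c (n - 1 - j) + 1` the one with the right boundary condition, and
`c (c (n - 1) + 2)` is their constant Wronskian `u j * v (j - 1) - u (j - 1) * v j`. -/
noncomputable def greenKernel (n : ℕ) (c : ℝ) (j k : ℕ) : ℝ :=
  if j ≤ k then (c * j + 1) * (c * (n - 1 - k) + 1) / (c * (c * (n - 1) + 2))
  else (c * k + 1) * (c * (n - 1 - j) + 1) / (c * (c * (n - 1) + 2))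

lemma greenKernel_pos {n : ℕ} {c : ℝ} (hc : 0 < c) {j k : ℕ} (hj : j < n) (hk : k < n) :
    0 < greenKernel n c j k := by
  have hu : ∀ m : ℕ, 0 < c * m + 1 := fun m => by positivity
  have hv : ∀ m : ℕ, m < n → 0 < c * (n - 1 - m) + 1 := fun m hm => by
    have : (m : ℝ) + 1 ≤ n := by exact_mod_cast hm
    nlinarith
  have hw : 0 < c * (c * (n - 1) + 2) := by
    have : (1 : ℝ) ≤ n := by exact_mod_cast (show 1 ≤ n by omega)
    exact mul_pos hc (by nlinarith)
  unfold greenKernel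
  split_ifs
  · exact div_pos (mul_pos (hu j) (hv k hk)) hw
  · exact div_pos (mul_pos (hu k) (hv j hj)) hw

lemma Ttilde_two_mulVec_greenKernel {n : ℕ} (hn : 2 ≤ n) {bt : ℝ} (hbt : 1 < bt) {k : ℕ}
    (hk : k < n) :
    (Ttilde n 2 bt *ᵥ fun j => greenKernel n (bt - 1) j k) =
      fun j : Fin n => if (j : ℕ) = k then 1 else 0 := by
  have hn' : (2 : ℝ) ≤ n := by exact_mod_cast hn
  have hw : (bt - 1) * (n - 1) + 2 ≠ 0 := by nlinarith
  have hc : bt - 1 ≠ 0 := by linarith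
  refine Ttilde_mulVec_eq_of (x := fun j => greenKernel n (bt - 1) j k)
    (y := fun j => if j = k then 1 else 0) hn ?_ (fun i _ => ?_) ?_
  on_goal 2 => obtain hki | rfl | hik := lt_trichotomy k i
  on_goal -1 => obtain rfl | hk2 := eq_or_ne k (n - 2)
  all_goals
    simp only [greenKernel]
    split_ifs <;> subst_vars <;> first
      | omega
      | (push_cast [Nat.cast_sub (by omega : 1 ≤ n), Nat.cast_sub hn]; field_simp; ring)

lemma Ttilde_two_mul_greenKernel {n : ℕ} (hn : 2 ≤ n) {bt : ℝ} (hbt : 1 < bt) :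
    Ttilde n 2 bt * of (fun j k : Fin n => greenKernel n (bt - 1) j k) = 1 := by
  ext i k
  exact (congrFun (Ttilde_two_mulVec_greenKernel hn hbt k.isLt) i).trans
    (by simp [one_apply, Fin.ext_iff])

lemma Ttilde_two_mulVec_rowSums {n : ℕ} (hn : 2 ≤ n) {bt : ℝ} (hbt : bt ≠ 1) :
    (Ttilde n 2 bt *ᵥ fun j => (j : ℝ) * (n - 1 - j) / 2 + n / (2 * (bt - 1))) =
      fun _ => 1 := by
  have hc : bt - 1 ≠ 0 := sub_ne_zero.2 hbt
  refine Ttilde_mulVec_eq_of (x := fun j => j * (n - 1 - j) / 2 + n / (2 * (bt - 1)))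
    (y := fun _ => 1) hn ?_ (fun i _ => ?_) ?_ <;>
    push_cast [Nat.cast_sub (by omega : 1 ≤ n), Nat.cast_sub hn] <;> field_simp <;> ring

lemma Matrix.sum_row_eq_of_mul_eq_one {m R : Type*} [Fintype m] [DecidableEq m] [CommRing R]
    {A B : Matrix m m R} (hAB : A * B = 1) {x : m → R} (hx : A *ᵥ x = fun _ => 1) (i : m) :
    ∑ j, B i j = x i := by
  have h := congrFun (congrArg (B *ᵥ ·) hx) i
  rw [mulVec_mulVec, mul_eq_one_comm.1 hAB, one_mulVec] at h
  simpa [mulVec, dotProduct] using h.symm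

lemma rowSum_le_bound (n t bt : ℝ) (hbt : bt ≠ 1) :
    t * (n - 1 - t) / 2 + n / (2 * (bt - 1)) ≤
      (n + 1) ^ 2 / 8 - n * (bt - 2) / (2 * (bt - 1)) := by
  have hc : bt - 1 ≠ 0 := sub_ne_zero.2 hbt
  have hbound : (n + 1) ^ 2 / 8 - n * (bt - 2) / (2 * (bt - 1)) =
      (n - 1) ^ 2 / 8 + n / (2 * (bt - 1)) := by
    field_simp
    ring
  rw [hbound]
  linarith [sq_nonneg (n - 1 - 2 * t)]

theorem stmt8 (n : ℕ) (hn : 3 < n) (bt : ℝ) (hbt : 1 < bt) :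
    IsUnit (Ttilde n 2 bt) ∧
    (∀ i j : Fin n, 0 < (Ttilde n 2 bt)⁻¹ i j) ∧
    normInf ((Ttilde n 2 bt)⁻¹) ≤
      ((n : ℝ) + 1) ^ 2 / 8 - (n : ℝ) * (bt - 2) / (2 * (bt - 1)) := by
  have hn2 : 2 ≤ n := by omega
  have hTG := Ttilde_two_mul_greenKernel hn2 hbt
  rw [inv_eq_right_inv hTG]
  have hpos (i j : Fin n) : 0 < greenKernel n (bt - 1) i j :=
    greenKernel_pos (sub_pos.2 hbt) i.isLt j.isLt
  refine ⟨(isUnit_iff_isUnit_det _).2 (isUnit_det_of_right_inverse hTG), hpos, ?_⟩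
  have : Nonempty (Fin n) := ⟨⟨0, by omega⟩⟩
  refine ciSup_le fun i => ?_
  calc ∑ j, |of (fun j k : Fin n => greenKernel n (bt - 1) j k) i j|
      _ = ∑ j, of (fun j k : Fin n => greenKernel n (bt - 1) j k) i j :=
        sum_congr rfl fun j _ => abs_of_pos (hpos i j)
      _ = (i : ℝ) * (n - 1 - i) / 2 + n / (2 * (bt - 1)) :=
        sum_row_eq_of_mul_eq_one hTG (Ttilde_two_mulVec_rowSums hn2 hbt.ne') i
      _ ≤ _ := rowSum_le_bound _ _ _ hbt.ne'
end

section
/- Let n > 3 be an integer and b̃ ∈ ℝ with (n−3)/(n−1) < b̃ < (n−2)/(n−1), and set γ = (2−b̃)/(1−b̃). Then T̃ₙ(2, b̃) is invertible and ‖T̃ₙ(2, b̃)⁻¹‖∞ ≤ max{ n(1−γ)/2 + (γ−1)²(γ+1)/(2γ−n−1) , n(γ−1)/2 + (γ/(2γ−n−1))·(n+1)²/16 + 1/2 }. -/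
open Matrix BigOperators Finset

/-!
With `γ = (2 - bt) / (1 - bt)` (`g` below), i.e. `bt * (1 - γ) = 2 - γ`, the inverse of
`Ttilde n 2 bt` is explicit. The sequences `u j = j + 1 - γ` and `v j = n - j - γ` (0-based) satisfy
the interior recurrence `x (j - 1) + x (j + 1) = 2 x j` and the boundary condition of the first,
resp. last, row, and their Wronskian is `n + 1 - 2γ`; hence
`T̃⁻¹ j k = u (min j k) * v (max j k) / (n + 1 - 2γ)`.
The hypotheses on `bt` say `(n + 1) / 2 < γ < n`. A row sum of `|T̃⁻¹|` factors through the sums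
`∑ m < t, |m + 1 - γ|`, which have a closed-form upper bound, and what remains is a polynomial
inequality in the row index that yields the first term of the maximum.
-/

theorem sum_range_tridiag_mul (n i : ℕ) (hi : i < n) (d : ℝ) (F : ℕ → ℝ) :
    ∑ m ∈ range n, (if i = m then d else if i + 1 = m ∨ m + 1 = i then (-1 : ℝ) else 0) * F m =
      d * F i - (if i = 0 then 0 else F (i - 1)) - (if i + 1 = n then 0 else F (i + 1)) := by
  have hsplit : ∀ m, (if i = m then d else if i + 1 = m ∨ m + 1 = i then (-1 : ℝ) else 0) * F m =
      (if m = i then d * F m else 0) - (if m + 1 = i then F m else 0) -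
        (if m = i + 1 then F m else 0) := by
    intro m
    split_ifs <;> first | omega | ring
  have hprev : ∑ m ∈ range n, (if m + 1 = i then F m else 0) = if i = 0 then 0 else F (i - 1) := by
    rcases i with _ | i
    · exact sum_eq_zero fun m _ => if_neg (by omega)
    · simp [show i < n by omega]
  have hnext :
      ∑ m ∈ range n, (if m = i + 1 then F m else 0) = if i + 1 = n then 0 else F (i + 1) := by
    by_cases h : i + 1 = n
    · simp [h]
    · simp [h, show i + 1 < n by omega]
  simp only [hsplit, sum_sub_distrib, hprev, hnext, sum_ite_eq', mem_range, if_pos hi]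

theorem Ttilde_mul_apply {n : ℕ} (b bt : ℝ) (A : Matrix (Fin n) (Fin n) ℝ) (k : Fin n) (F : ℕ → ℝ)
    (hF : ∀ j : Fin n, A j k = F j) (i : Fin n) :
    (Ttilde n b bt * A) i k =
      (if (i : ℕ) = 0 ∨ (i : ℕ) = n - 1 then bt else b) * F i
        - (if (i : ℕ) = 0 then 0 else F (i - 1)) - (if (i : ℕ) + 1 = n then 0 else F (i + 1)) := by
  rw [mul_apply, ← sum_range_tridiag_mul n i i.isLt]
  simp only [Ttilde, of_apply, hF]
  exact Fin.sum_univ_eq_sum_range (fun m => (if (i : ℕ) = m then _ else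
    if (i : ℕ) + 1 = m ∨ m + 1 = (i : ℕ) then (-1 : ℝ) else 0) * F m) n

section GreenMatrix

variable (n : ℕ) (g : ℝ)

noncomputable def green (j k : ℕ) : ℝ :=
  (((min j k : ℕ) : ℝ) + 1 - g) * ((n : ℝ) - ((max j k : ℕ) : ℝ) - g)

noncomputable def greenMatrix : Matrix (Fin n) (Fin n) ℝ :=
  ((n : ℝ) + 1 - 2 * g)⁻¹ • Matrix.of fun j k : Fin n => green n g j k

variable {n g}

theorem green_of_le {j k : ℕ} (h : j ≤ k) :
    green n g j k = ((j : ℝ) + 1 - g) * ((n : ℝ) - k - g) := by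
  rw [green, Nat.min_eq_left h, Nat.max_eq_right h]

theorem green_of_ge {j k : ℕ} (h : k ≤ j) :
    green n g j k = ((k : ℝ) + 1 - g) * ((n : ℝ) - j - g) := by
  rw [green, Nat.min_eq_right h, Nat.max_eq_left h]

theorem Ttilde_mul_green {bt : ℝ} (hn : 2 ≤ n) (hbt : bt * (1 - g) = 2 - g) :
    Ttilde n 2 bt * Matrix.of (fun j k : Fin n => green n g j k) = ((n : ℝ) + 1 - 2 * g) • 1 := by
  ext ⟨i, hi⟩ ⟨k, hk⟩
  rw [Ttilde_mul_apply 2 bt _ _ (fun j => green n g j k) (fun _ => of_apply _ _ _)]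
  simp only [Matrix.smul_apply, one_apply, Fin.mk.injEq, smul_eq_mul, mul_ite, mul_one, mul_zero]
  rcases i with _ | i
  · rw [if_pos (Or.inl rfl), if_pos rfl, if_neg (by omega), green_of_le (Nat.zero_le _)]
    rcases k with _ | k
    · rw [green_of_ge (Nat.zero_le _), if_pos rfl]
      push_cast
      linear_combination (n - g) * hbt
    · rw [green_of_le (by omega), if_neg (by omega)]
      push_cast
      linear_combination (n - k - 1 - g) * hbt
  rw [if_neg (Nat.succ_ne_zero i), Nat.add_sub_cancel]
  by_cases hlast : i + 1 + 1 = n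
  · subst hlast
    rw [if_pos (Or.inr (by omega)), if_pos rfl]
    rcases (Nat.lt_succ_iff.mp hk).lt_or_eq with hki | rfl
    · rw [green_of_ge (by omega), green_of_ge (by omega), if_neg (by omega)]
      push_cast
      linear_combination (k + 1 - g) * hbt
    · rw [green_of_le le_rfl, green_of_le (by omega), if_pos rfl]
      push_cast
      linear_combination (i + 2 - g) * hbt
  · rw [if_neg (by omega), if_neg hlast]
    rcases lt_trichotomy k (i + 1) with hki | rfl | hki
    · rw [green_of_ge (by omega), green_of_ge (by omega), green_of_ge (by omega), if_neg (by omega)]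
      push_cast
      ring
    · rw [green_of_le le_rfl, green_of_le (by omega), green_of_ge (by omega), if_pos rfl]
      push_cast
      ring
    · rw [green_of_le (by omega), green_of_le (by omega), green_of_le (by omega), if_neg (by omega)]
      push_cast
      ring

theorem Ttilde_mul_greenMatrix {bt : ℝ} (hn : 2 ≤ n) (hc : (n : ℝ) + 1 - 2 * g ≠ 0)
    (hbt : bt * (1 - g) = 2 - g) : Ttilde n 2 bt * greenMatrix n g = 1 := by
  rw [greenMatrix, Matrix.mul_smul, Ttilde_mul_green hn hbt, smul_smul, inv_mul_cancel₀ hc,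
    one_smul]

theorem sum_range_abs_green {i : ℕ} (hi : i < n) :
    ∑ m ∈ range n, |green n g i m| =
      |(n : ℝ) - i - g| * ∑ m ∈ range (i + 1), |(m : ℝ) + 1 - g|
        + |(i : ℝ) + 1 - g| * ∑ m ∈ range (n - 1 - i), |(m : ℝ) + 1 - g| := by
  rw [← sum_range_add_sum_Ico _ hi, mul_sum, mul_sum]
  congr 1
  · refine sum_congr rfl fun m hm => ?_
    rw [green_of_ge (by simpa [Nat.lt_succ_iff] using hm), abs_mul, mul_comm]
  · have hreflect := sum_Ico_reflect (fun r => |(i : ℝ) + 1 - g| * |(r : ℝ) + 1 - g|) (i + 1)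
      (show n ≤ n - 1 + 1 by omega)
    rw [show n - 1 + 1 - n = 0 by omega, show n - 1 + 1 - (i + 1) = n - 1 - i by omega,
      ← range_eq_Ico] at hreflect
    rw [← hreflect]
    refine sum_congr rfl fun m hm => ?_
    have hm' := mem_Ico.mp hm
    rw [green_of_le (by omega), abs_mul, Nat.cast_sub (by omega), Nat.cast_sub (by omega : 1 ≤ n)]
    push_cast
    ring_nf

end GreenMatrix

theorem sum_range_abs_eq_of_le {g : ℝ} {t : ℕ} (ht : (t : ℝ) ≤ g) :
    ∑ m ∈ range t, |(m : ℝ) + 1 - g| = t * g - t * (t + 1) / 2 := by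
  induction t with
  | zero => simp
  | succ t ih =>
    push_cast at ht ⊢
    rw [sum_range_succ, ih (by linarith), abs_of_nonpos (by linarith)]
    ring

theorem sum_range_abs_le (g : ℝ) (t : ℕ) :
    ∑ m ∈ range t, |(m : ℝ) + 1 - g| ≤ t * g - t * (t + 1) / 2 + (max 0 (t - g) + 1 / 2) ^ 2 := by
  induction t with
  | zero => simpa using sq_nonneg (max 0 (-g) + 1 / 2)
  | succ t ih =>
    push_cast
    rw [sum_range_succ]
    rcases le_or_gt (t : ℝ) g with ht | ht
    · rw [sum_range_abs_eq_of_le ht]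
      rcases le_or_gt ((t : ℝ) + 1) g with ht' | ht'
      · rw [max_eq_left (by linarith), abs_of_nonpos (by linarith)]
        linarith
      · rw [max_eq_right (by linarith), abs_of_pos (by linarith)]
        nlinarith [sq_nonneg ((t : ℝ) + 1 - g - 1 / 2)]
    · rw [max_eq_right (by linarith), abs_of_pos (by linarith)]
      rw [max_eq_right (by linarith)] at ih
      linarith

theorem green_row_estimate {N g x : ℝ} (hN : 4 ≤ N) (hg1 : N + 1 < 2 * g) (hg2 : g < N)
    (hx1 : 1 ≤ x) (hx2 : x ≤ N) :
    |N + 1 - x - g| * (x * g - x * (x + 1) / 2 + (max 0 (x - g) + 1 / 2) ^ 2)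
      + |x - g| * ((N - x) * g - (N - x) * (N - x + 1) / 2 + (max 0 (N - x - g) + 1 / 2) ^ 2)
    ≤ (2 * g - N - 1) * (N * (1 - g) / 2) + (g - 1) ^ 2 * (g + 1) := by
  rcases le_or_gt g x with hgx | hgx
  · rw [max_eq_right (by linarith), max_eq_left (by linarith),
      abs_of_nonneg (by linarith : 0 ≤ x - g), abs_of_nonpos (by linarith : N + 1 - x - g ≤ 0)]
    nlinarith [sq_nonneg (x - g), sq_nonneg (N - x), sq_nonneg (x + g - N - 1), sq_nonneg (g - 1),
      mul_nonneg (sub_nonneg.mpr hgx) (sub_nonneg.mpr hx2)]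
  rw [max_eq_left (by linarith : x - g ≤ 0), abs_of_neg (by linarith : x - g < 0)]
  rcases le_or_gt x (N - g) with hxg | hxg
  · rw [max_eq_right (by linarith), abs_of_nonneg (by linarith : 0 ≤ N + 1 - x - g)]
    nlinarith [sq_nonneg (N - x - g), sq_nonneg (g - x), sq_nonneg (x - 1),
      mul_nonneg (sub_nonneg.mpr hx1) (sub_nonneg.mpr hxg)]
  rw [max_eq_left (by linarith : N - x - g ≤ 0)]
  rcases le_or_gt (N + 1 - x - g) 0 with hv | hv
  · rw [abs_of_nonpos hv]
    have ha : (0 : ℝ) ≤ x + g - N - 1 := by linarith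
    have hb : (0 : ℝ) ≤ g - x := by linarith
    have hs : (0 : ℝ) ≤ x - 1 := by linarith
    have hf : (0 : ℝ) ≤ N - g := by linarith
    nlinarith [mul_nonneg ha hb, mul_nonneg ha hs, mul_nonneg ha hf, mul_nonneg hb hs,
      mul_nonneg hb hf, mul_nonneg hs hf, mul_nonneg (mul_nonneg ha hb) hs,
      mul_nonneg (mul_nonneg ha hb) hf, mul_nonneg (mul_nonneg hb hs) hf,
      mul_nonneg (mul_nonneg ha hs) hf]
  · rw [abs_of_pos hv]
    nlinarith [sq_nonneg (g - x), sq_nonneg (x - 1), sq_nonneg (N - x - g),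
      mul_nonneg (sub_nonneg.mpr hx1) (sub_nonneg.mpr hx2)]

theorem sum_abs_greenMatrix_le {n : ℕ} {g : ℝ} (hn : 4 ≤ n) (hg1 : (n : ℝ) + 1 < 2 * g)
    (hg2 : g < n) (i : Fin n) :
    ∑ j, |greenMatrix n g i j| ≤ n * (1 - g) / 2 + (g - 1) ^ 2 * (g + 1) / (2 * g - n - 1) := by
  have hD : 0 < 2 * g - n - 1 := by linarith
  have hentry : ∀ j, |greenMatrix n g i j| = |green n g i j| / (2 * g - n - 1) := by
    intro j
    rw [greenMatrix, Matrix.smul_apply, of_apply, smul_eq_mul, abs_mul, abs_inv,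
      abs_of_neg (by linarith : (n : ℝ) + 1 - 2 * g < 0)]
    ring
  rw [sum_congr rfl fun j _ => hentry j, ← sum_div, div_le_iff₀ hD,
    Fin.sum_univ_eq_sum_range (fun m => |green n g i m|), sum_range_abs_green i.isLt]
  set x : ℝ := (i : ℝ) + 1
  have hx1 : 1 ≤ x := by simp [x]
  have hx2 : x ≤ n := by simpa [x] using (Nat.cast_le (α := ℝ)).mpr i.isLt
  have hleft := sum_range_abs_le g (i + 1)
  have hright := sum_range_abs_le g (n - 1 - i)
  rw [show (((i + 1 : ℕ)) : ℝ) = x by push_cast; rfl] at hleft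
  rw [show ((n - 1 - i : ℕ) : ℝ) = n - x by
    rw [show n - 1 - i = n - (i + 1) by omega, Nat.cast_sub i.isLt]; push_cast; rfl] at hright
  calc |(n : ℝ) - i - g| * ∑ m ∈ range (i + 1), |(m : ℝ) + 1 - g|
        + |x - g| * ∑ m ∈ range (n - 1 - i), |(m : ℝ) + 1 - g|
      ≤ |n + 1 - x - g| * (x * g - x * (x + 1) / 2 + (max 0 (x - g) + 1 / 2) ^ 2)
        + |x - g| *
          ((n - x) * g - (n - x) * (n - x + 1) / 2 + (max 0 (n - x - g) + 1 / 2) ^ 2) := by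
        rw [show (n : ℝ) - i - g = n + 1 - x - g by ring]
        gcongr
    _ ≤ (2 * g - n - 1) * (n * (1 - g) / 2) + (g - 1) ^ 2 * (g + 1) :=
        green_row_estimate (by exact_mod_cast hn) hg1 hg2 hx1 hx2
    _ = _ := by field_simp

theorem stmt14 (n : ℕ) (hn : 3 < n) (bt : ℝ)
    (hbt1 : ((n : ℝ) - 3) / ((n : ℝ) - 1) < bt) (hbt2 : bt < ((n : ℝ) - 2) / ((n : ℝ) - 1)) :
    IsUnit (Ttilde n 2 bt) ∧
    normInf ((Ttilde n 2 bt)⁻¹) ≤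
      max ((n : ℝ) * (1 - (2 - bt) / (1 - bt)) / 2
            + ((2 - bt) / (1 - bt) - 1) ^ 2 * ((2 - bt) / (1 - bt) + 1)
                / (2 * ((2 - bt) / (1 - bt)) - (n : ℝ) - 1))
        ((n : ℝ) * ((2 - bt) / (1 - bt) - 1) / 2
            + ((2 - bt) / (1 - bt)) / (2 * ((2 - bt) / (1 - bt)) - (n : ℝ) - 1)
                * (((n : ℝ) + 1) ^ 2 / 16)
            + 1 / 2) := by
  have hN : (4 : ℝ) ≤ n := by exact_mod_cast hn
  rw [div_lt_iff₀ (by linarith)] at hbt1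
  rw [lt_div_iff₀ (by linarith)] at hbt2
  have h1bt : 0 < 1 - bt := by nlinarith
  set g := (2 - bt) / (1 - bt) with hg
  have hbt_g : bt * (1 - g) = 2 - g := by rw [hg]; field_simp; ring
  have hg1 : (n : ℝ) + 1 < 2 * g := by rw [hg, ← mul_div_assoc, lt_div_iff₀ h1bt]; linarith
  have hg2 : g < n := by rw [hg, div_lt_iff₀ h1bt]; linarith
  have hinv : Ttilde n 2 bt * greenMatrix n g = 1 :=
    Ttilde_mul_greenMatrix (by omega) (by linarith) hbt_g
  refine ⟨IsUnit.of_mul_eq_one _ hinv, ?_⟩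
  have : Nonempty (Fin n) := ⟨⟨0, by omega⟩⟩
  rw [Matrix.inv_eq_right_inv hinv, normInf]
  exact ciSup_le fun i => (sum_abs_greenMatrix_le hn hg1 hg2 i).trans (le_max_left _ _)
end
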